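/- Every cycle of the explorer-neighbourhood Expl(v,w) is generated, over 𝔽₂, by the cycles of the embedded balls B_{r/2}(v)' and B_{r/2}(w)'. -/

import Mathlib

/-!
`Expl(v,w)` is the union of the embedded balls `B_{r/2}(v)'` and `B_{r/2}(w)'`, and the two
overlap along a connected part: a glued vertex is reached from the core by a shortest path of
`B_{r/2}(v)`, which is shortest in `B_{r/2}(w)` as well because the labels agree, so all its
vertices are glued too; and the core is reached from `v` along shortest `v`–`w` paths.

Whenever a graph is covered by two subgraphs whose common vertices are joined inside their
intersection, every closed walk is a sum over `𝔽₂` of closed walks each lying in one of the two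
subgraphs: cut it where it passes from one subgraph to the other and close the pieces up through
the intersection. Finally a closed walk inside a subgraph is a sum of cycles of that subgraph,
peeled off one at a time by `Walk.bypass`.
-/

open SimpleGraph

universe u

namespace LocalSep

variable {V : Type u}

/-- The ball of radius `r/2` around `v`: vertices of distance at most `⌊r/2⌋` from `v`;
if `r` is even, edges joining two vertices of distance exactly `r/2` are removed. -/
def ballVerts (G : SimpleGraph V) (v : V) (r : ℕ) : Set V :=
  {u | G.Reachable v u ∧ G.dist v u ≤ r / 2}

def ball (G : SimpleGraph V) (v : V) (r : ℕ) : G.Subgraph where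
  verts := ballVerts G v r
  Adj u u' := G.Adj u u' ∧ u ∈ ballVerts G v r ∧ u' ∈ ballVerts G v r ∧
    (Even r → ¬(G.dist v u = r / 2 ∧ G.dist v u' = r / 2))
  adj_sub h := h.1
  edge_vert h := h.2.1
  symm := ⟨fun u u' h => ⟨h.1.symm, h.2.2.1, h.2.1, fun he hc => h.2.2.2 he ⟨hc.2, hc.1⟩⟩⟩

/-- `v` is an `r`-local cutvertex if the punctured ball `B_{r/2}(v) - v` is disconnected. -/
def IsLocalCutvertex (G : SimpleGraph V) (r : ℕ) (v : V) : Prop :=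
  ¬ ((ball G v r).deleteVerts {v}).coe.Connected

def HasShortCycle (G : SimpleGraph V) (r : ℕ) : Prop :=
  ∃ (u : V) (c : G.Walk u u), c.IsCycle ∧ c.length ≤ r

/-- A connected graph is `r`-locally 2-connected if it has no `r`-local cutvertex
and contains a cycle of length at most `r`. -/
def LocallyTwoConnected (G : SimpleGraph V) (r : ℕ) : Prop :=
  G.Connected ∧ (∀ v : V, ¬ IsLocalCutvertex G r v) ∧ HasShortCycle G r

/-- The core of `(a₁, a₂)`: all vertices on shortest `a₁`–`a₂` paths. -/
def core (G : SimpleGraph V) (a₁ a₂ : V) : Set V :=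
  {x | ∃ p : G.Walk a₁ a₂, p.IsPath ∧ p.length = G.dist a₁ a₂ ∧ x ∈ p.support}

/-- A walk is contained in a subgraph. -/
def WalkIn {G : SimpleGraph V} (B : G.Subgraph) {x y : V} (p : G.Walk x y) : Prop :=
  p.toSubgraph ≤ B

/-- The label of a vertex `u` in a ball `B`: the set of (supports of) shortest paths
from the core `C` to `u` contained in `B`. -/
def labelIn (G : SimpleGraph V) (B : G.Subgraph) (C : Set V) (u : V) : Set (List V) :=
  {l | ∃ c ∈ C, ∃ p : G.Walk c u, p.IsPath ∧ WalkIn B p ∧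
    (∀ c' ∈ C, ∀ q : G.Walk c' u, q.IsPath → WalkIn B q → p.length ≤ q.length) ∧
    l = p.support}

/-- A potential vertex of the explorer-neighbourhood: a vertex together with a label. -/
abbrev EVert (V : Type u) : Type u := V × Set (List V)

/-- `p` is the copy of the vertex `p.1` in the labelled ball around `a ∈ {a₁, a₂}`. -/
def inCopy (G : SimpleGraph V) (a₁ a₂ : V) (r : ℕ) (a : V) (p : EVert V) : Prop :=
  p.1 ∈ ballVerts G a r ∧ p.2 = labelIn G (ball G a r) (core G a₁ a₂) p.1

/-- Vertices of the explorer-neighbourhood `Expl(a₁,a₂)`. -/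
def explVerts (G : SimpleGraph V) (a₁ a₂ : V) (r : ℕ) : Set (EVert V) :=
  {p | inCopy G a₁ a₂ r a₁ p ∨ inCopy G a₁ a₂ r a₂ p}

/-- The explorer-neighbourhood `Expl(a₁,a₂)`: the union of the two labelled balls,
where two copies of a vertex are identified iff their labels agree. -/
def expl (G : SimpleGraph V) (a₁ a₂ : V) (r : ℕ) : SimpleGraph (EVert V) where
  Adj p q :=
    (inCopy G a₁ a₂ r a₁ p ∧ inCopy G a₁ a₂ r a₁ q ∧ (ball G a₁ r).Adj p.1 q.1) ∨
    (inCopy G a₁ a₂ r a₂ p ∧ inCopy G a₁ a₂ r a₂ q ∧ (ball G a₂ r).Adj p.1 q.1)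
  symm := ⟨by
    intro p q h
    rcases h with ⟨h1, h2, h3⟩ | ⟨h1, h2, h3⟩
    · exact Or.inl ⟨h2, h1, h3.symm⟩
    · exact Or.inr ⟨h2, h1, h3.symm⟩⟩
  loopless := ⟨by
    intro p h
    rcases h with ⟨-, -, h⟩ | ⟨-, -, h⟩ <;> exact G.ne_of_adj h.adj_sub rfl⟩

/-- Vertices of the punctured explorer-neighbourhood `Expl(a₁,a₂) - a₁ - a₂`. -/
def pexplVerts (G : SimpleGraph V) (a₁ a₂ : V) (r : ℕ) : Set (EVert V) :=
  {p | p ∈ explVerts G a₁ a₂ r ∧ p.1 ≠ a₁ ∧ p.1 ≠ a₂}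

/-- The punctured explorer-neighbourhood `Expl(a₁,a₂) - a₁ - a₂`. -/
def pexpl (G : SimpleGraph V) (a₁ a₂ : V) (r : ℕ) :
    SimpleGraph (pexplVerts G a₁ a₂ r) :=
  SimpleGraph.induce (pexplVerts G a₁ a₂ r) (expl G a₁ a₂ r)

/-- `{v,w}` is an `r`-local 2-separator: `v,w` have distance at most `r/2` and the
punctured explorer-neighbourhood is disconnected. -/
def IsLocalTwoSep (G : SimpleGraph V) (r : ℕ) (v w : V) : Prop :=
  v ≠ w ∧ G.Reachable v w ∧ 2 * G.dist v w ≤ r ∧ ¬ (pexpl G v w r).Connected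

/-- The pair `(p,q)` of vertices of `Expl(b₁,b₂)` crosses the local 2-separator `{b₁,b₂}`:
they lie in different components of the punctured explorer-neighbourhood and there is a cycle
of length at most `r` through them containing a copy of `b₁` or `b₂`. -/
def CrossesPair (G : SimpleGraph V) (r : ℕ) (b₁ b₂ : V) (p q : EVert V) : Prop :=
  ∃ (hp : p ∈ pexplVerts G b₁ b₂ r) (hq : q ∈ pexplVerts G b₁ b₂ r),
    ¬ (pexpl G b₁ b₂ r).Reachable ⟨p, hp⟩ ⟨q, hq⟩ ∧
    ∃ (u : EVert V) (c : (expl G b₁ b₂ r).Walk u u), c.IsCycle ∧ c.length ≤ r ∧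
      p ∈ c.support ∧ q ∈ c.support ∧ ∃ z ∈ c.support, z.1 = b₁ ∨ z.1 = b₂

/-- `{a₁,a₂}` crosses `{b₁,b₂}`: some copies of `a₁`, `a₂` cross `{b₁,b₂}`. -/
def Crosses (G : SimpleGraph V) (r : ℕ) (a₁ a₂ b₁ b₂ : V) : Prop :=
  ∃ p q : EVert V, p.1 = a₁ ∧ q.1 = a₂ ∧ CrossesPair G r b₁ b₂ p q

/-- Some copy of `x` lies in the same component of `Expl(v,w) - v - w` as some copy of `y`. -/
def CopyReach (G : SimpleGraph V) (r : ℕ) (v w x y : V) : Prop :=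
  ∃ (p q : EVert V) (hp : p ∈ pexplVerts G v w r) (hq : q ∈ pexplVerts G v w r),
    p.1 = x ∧ q.1 = y ∧ (pexpl G v w r).Reachable ⟨p, hp⟩ ⟨q, hq⟩

/-- A cycle through `a₁` alternating between `{a₁,a₂}` and `{b₁,b₂}`: the four vertices are
distinct and `b₁`, `b₂` lie on different arcs of the cycle between `a₁` and `a₂`. -/
def AltCycle (G : SimpleGraph V) (a₁ a₂ b₁ b₂ : V) (c : G.Walk a₁ a₁) : Prop :=
  c.IsCycle ∧ b₁ ≠ b₂ ∧ b₁ ∉ ({a₁, a₂} : Set V) ∧ b₂ ∉ ({a₁, a₂} : Set V) ∧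
  ∃ (p : G.Walk a₁ a₂) (q : G.Walk a₂ a₁), c = p.append q ∧
    ((b₁ ∈ p.support ∧ b₂ ∈ q.support) ∨ (b₂ ∈ p.support ∧ b₁ ∈ q.support))

/-- `S` is generated over `𝔽₂` by members of `C` (sum = symmetric difference). -/
def GeneratedBy {α : Type*} (C : Set (Set (Sym2 α))) (S : Set (Sym2 α)) : Prop :=
  ∃ l : List (Set (Sym2 α)), (∀ A ∈ l, A ∈ C) ∧ l.foldr symmDiff ∅ = S

/-- The edge set of a walk. -/
def walkEdgeSet {α : Type*} {H : SimpleGraph α} {x y : α} (c : H.Walk x y) : Set (Sym2 α) :=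
  {e | e ∈ c.edges}


/-- A cycle of the explorer-neighbourhood contained in the embedded copy of the ball
`B_{r/2}(a)`: all its vertices are copies from that ball and all its edges are ball edges. -/
def BallCopyCycle {V : Type u} (G : SimpleGraph V) (a₁ a₂ : V) (r : ℕ) (a : V)
    {u : EVert V} (c : (expl G a₁ a₂ r).Walk u u) : Prop :=
  (∀ p ∈ c.support, inCopy G a₁ a₂ r a p) ∧
  ∀ d ∈ c.darts, (ball G a r).Adj d.toProd.1.1 d.toProd.2.1

open scoped symmDiff

section GeneratedBy

variable {α : Type*} {C C' : Set (Set (Sym2 α))} {S T : Set (Sym2 α)}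

theorem generatedBy_empty : GeneratedBy C ∅ := ⟨[], by simp, rfl⟩

theorem generatedBy_of_mem (h : S ∈ C) : GeneratedBy C S :=
  ⟨[S], by simpa using h, by simp⟩

theorem GeneratedBy.symmDiff (hS : GeneratedBy C S) (hT : GeneratedBy C T) :
    GeneratedBy C (S ∆ T) := by
  obtain ⟨l₁, h₁, rfl⟩ := hS
  obtain ⟨l₂, h₂, rfl⟩ := hT
  refine ⟨l₁ ++ l₂, by simpa [or_imp, forall_and] using ⟨h₁, h₂⟩, ?_⟩
  rw [List.foldr_append]
  induction l₁ with
  | nil => exact (bot_symmDiff _).symm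
  | cons A l ih => simp [ih fun B hB => h₁ B (by simp [hB]), symmDiff_assoc]

theorem GeneratedBy.mono (hC : C ⊆ C') (hS : GeneratedBy C S) : GeneratedBy C' S :=
  let ⟨l, hl, hS⟩ := hS
  ⟨l, fun A hA => hC (hl A hA), hS⟩

end GeneratedBy

section WalkIn

variable {α : Type*} {H : SimpleGraph α} {K K' : H.Subgraph} {x y z : α}

theorem walkIn_nil_iff : WalkIn K (Walk.nil : H.Walk x x) ↔ x ∈ K.verts :=
  singletonSubgraph_le_iff x K

theorem walkIn_cons_iff (h : H.Adj x y) (p : H.Walk y z) :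
    WalkIn K (Walk.cons h p) ↔ K.Adj x y ∧ WalkIn K p := by
  rw [WalkIn, Walk.toSubgraph, sup_le_iff, subgraphOfAdj_le_iff]; rfl

theorem walkIn_append_iff (p : H.Walk x y) (q : H.Walk y z) :
    WalkIn K (p.append q) ↔ WalkIn K p ∧ WalkIn K q := by
  rw [WalkIn, Walk.toSubgraph_append, sup_le_iff]; rfl

theorem WalkIn.reverse {p : H.Walk x y} (hp : WalkIn K p) : WalkIn K p.reverse := by
  rwa [WalkIn, Walk.toSubgraph_reverse]

theorem WalkIn.mono {p : H.Walk x y} (hp : WalkIn K p) (hK : K ≤ K') : WalkIn K' p :=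
  le_trans hp hK

theorem WalkIn.bypass [DecidableEq α] {p : H.Walk x y} (hp : WalkIn K p) :
    WalkIn K p.bypass :=
  Walk.toSubgraph_bypass_le_toSubgraph.trans hp

theorem walkIn_toWalk {h : H.Adj x y} (hK : K.Adj x y) : WalkIn K h.toWalk :=
  (walkIn_cons_iff h _).mpr ⟨hK, walkIn_nil_iff.mpr hK.snd_mem⟩

theorem WalkIn.concat {p : H.Walk x y} (hp : WalkIn K p) {h : H.Adj y z} (hK : K.Adj y z) :
    WalkIn K (p.concat h) := by
  rw [Walk.concat_eq_append, walkIn_append_iff]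
  exact ⟨hp, walkIn_toWalk hK⟩

theorem WalkIn.mem_verts {p : H.Walk x y} (hp : WalkIn K p) (hz : z ∈ p.support) :
    z ∈ K.verts :=
  hp.1 (p.mem_verts_toSubgraph.mpr hz)

theorem WalkIn.takeUntil [DecidableEq α] {p : H.Walk x y} (hp : WalkIn K p)
    (hz : z ∈ p.support) : WalkIn K (p.takeUntil z hz) := by
  rw [← p.take_spec hz, walkIn_append_iff] at hp
  exact hp.1

theorem WalkIn.induce {p : H.Walk x y} (hp : WalkIn K p) {s : Set α}
    (hs : ∀ z ∈ p.support, z ∈ s) : WalkIn (K.induce s) p := by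
  refine ⟨fun z hz => hs z (p.mem_verts_toSubgraph.mp hz), fun a b hab => ?_⟩
  exact ⟨hs a (Walk.mem_support_of_adj_toSubgraph hab),
    hs b (Walk.mem_support_of_adj_toSubgraph hab.symm), hp.2 hab⟩

end WalkIn

section OddEdges

variable {α : Type*} [DecidableEq α] {H : SimpleGraph α} {x y z : α}

/-- The `𝔽₂`-chain of a walk. -/
def oddEdges (p : H.Walk x y) : Set (Sym2 α) := {e | Odd (p.edges.count e)}

@[simp]
theorem oddEdges_nil : oddEdges (Walk.nil : H.Walk x x) = ∅ := by
  simp [oddEdges]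

theorem oddEdges_append (p : H.Walk x y) (q : H.Walk y z) :
    oddEdges (p.append q) = oddEdges p ∆ oddEdges q := by
  ext e
  simp only [oddEdges, Walk.edges_append, List.count_append, Set.mem_ofPred_eq,
    Set.mem_symmDiff, Nat.odd_add, ← Nat.not_odd_iff_even]
  tauto

@[simp]
theorem oddEdges_reverse (p : H.Walk x y) : oddEdges p.reverse = oddEdges p := by
  simp [oddEdges, Walk.edges_reverse]

theorem oddEdges_cons (h : H.Adj x y) (p : H.Walk y z) :
    oddEdges (Walk.cons h p) = {s(x, y)} ∆ oddEdges p := by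
  rw [show Walk.cons h p = (Walk.cons h Walk.nil).append p from rfl, oddEdges_append]
  congr
  ext e
  rcases eq_or_ne e s(x, y) with rfl | he <;> simp [oddEdges, List.count_singleton, *, Ne.symm]

theorem oddEdges_of_isTrail {p : H.Walk x y} (hp : p.IsTrail) : oddEdges p = walkEdgeSet p := by
  ext e
  have h := List.nodup_iff_count_le_one.mp hp.edges_nodup e
  simp only [oddEdges, walkEdgeSet, Set.mem_ofPred_eq, ← List.count_pos_iff]
  constructor
  · exact Odd.pos
  · intro he; rw [show p.edges.count e = 1 by omega]; exact odd_one

end OddEdges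

section CycleSpace

variable {α : Type*} {H : SimpleGraph α} {K : H.Subgraph} {x y z : α}

def cyclesIn (K : H.Subgraph) : Set (Set (Sym2 α)) :=
  {S | ∃ (u : α) (c : H.Walk u u), c.IsCycle ∧ WalkIn K c ∧ S = walkEdgeSet c}

theorem eq_cons_nil_of_isPath_of_mem_edges {p : H.Walk y x} (hp : p.IsPath)
    (he : s(x, y) ∈ p.edges) : ∃ h : H.Adj y x, p = Walk.cons h Walk.nil := by
  cases p with
  | nil => simp at he
  | cons h q =>
    rw [Walk.cons_isPath_iff] at hp
    rcases List.mem_cons.mp he with he | he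
    · rcases Sym2.eq_iff.mp he with ⟨rfl, rfl⟩ | ⟨rfl, -⟩
      · exact absurd rfl h.ne
      · exact ⟨h, by rw [(Walk.isPath_iff_nil.mp hp.1).eq_nil]⟩
    · exact absurd (q.snd_mem_support_of_mem_edges he) hp.2

variable [DecidableEq α]

theorem generatedBy_oddEdges_cons_of_isPath (h : H.Adj x y) {p : H.Walk y x} (hp : p.IsPath)
    (hK : WalkIn K (Walk.cons h p)) : GeneratedBy (cyclesIn K) (oddEdges (Walk.cons h p)) := by
  by_cases he : s(x, y) ∈ p.edges
  · obtain ⟨h', rfl⟩ := eq_cons_nil_of_isPath_of_mem_edges hp he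
    convert generatedBy_empty
    simp [oddEdges_cons, Sym2.eq_swap (a := y)]
  · have hc : (Walk.cons h p).IsCycle := (Walk.cons_isCycle_iff p h).mpr ⟨hp, he⟩
    rw [oddEdges_of_isTrail hc.isTrail]
    exact generatedBy_of_mem ⟨x, _, hc, hK, rfl⟩

theorem generatedBy_oddEdges_symmDiff_bypass (p : H.Walk x y) (hp : WalkIn K p) :
    GeneratedBy (cyclesIn K) (oddEdges p ∆ oddEdges p.bypass) := by
  induction p with
  | nil => simpa [Walk.bypass] using generatedBy_empty
  | @cons x m y h p ih =>
    rw [walkIn_cons_iff] at hp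
    have hrec := ih hp.2
    simp only [Walk.bypass]
    split_ifs with hx
    · -- `bypass` drops the closed detour `cons h (p.bypass.takeUntil x)`
      have hcyc := generatedBy_oddEdges_cons_of_isPath h (p.bypass_isPath.takeUntil hx)
        ((walkIn_cons_iff h _).mpr ⟨hp.1, (hp.2.bypass.takeUntil hx)⟩)
      convert hcyc.symmDiff hrec using 1
      have hsplit := congrArg oddEdges (p.bypass.take_spec hx)
      rw [oddEdges_append] at hsplit
      rw [oddEdges_cons, oddEdges_cons, ← hsplit]
      simp only [symmDiff_assoc, symmDiff_comm, symmDiff_left_comm, symmDiff_self, bot_symmDiff]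
    · rwa [oddEdges_cons, oddEdges_cons, symmDiff_symmDiff_symmDiff_comm, symmDiff_self,
        bot_symmDiff]

theorem generatedBy_oddEdges_of_closed (c : H.Walk x x) (hc : WalkIn K c) :
    GeneratedBy (cyclesIn K) (oddEdges c) := by
  have h := generatedBy_oddEdges_symmDiff_bypass c hc
  rwa [(Walk.isPath_iff_nil.mp c.bypass_isPath).eq_nil, oddEdges_nil, ← Set.bot_eq_empty,
    symmDiff_bot] at h

end CycleSpace

section Union

variable {α : Type*} {H : SimpleGraph α} {K₁ K₂ K : H.Subgraph} {x y z : α}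

theorem inf_le_of_eq_or_eq (hK : K = K₁ ∨ K = K₂) : K₁ ⊓ K₂ ≤ K := by
  rcases hK with rfl | rfl
  exacts [inf_le_left, inf_le_right]

theorem exists_adj_of_cover (hcover : ∀ ⦃a b⦄, H.Adj a b → K₁.Adj a b ∨ K₂.Adj a b)
    (h : H.Adj x y) : ∃ K, (K = K₁ ∨ K = K₂) ∧ K.Adj x y := by
  rcases hcover h with h' | h'
  exacts [⟨K₁, Or.inl rfl, h'⟩, ⟨K₂, Or.inr rfl, h'⟩]

theorem adj_of_notMem_inter (hcover : ∀ ⦃a b⦄, H.Adj a b → K₁.Adj a b ∨ K₂.Adj a b)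
    (hK : K = K₁ ∨ K = K₂) (hxK : x ∈ K.verts) (hx : x ∉ K₁.verts ∩ K₂.verts)
    (h : H.Adj x y) : K.Adj x y := by
  rcases hK with rfl | rfl <;> rcases hcover h with h' | h'
  exacts [h', absurd ⟨hxK, h'.fst_mem⟩ hx, absurd ⟨h'.fst_mem, hxK⟩ hx, h']

variable [DecidableEq α]

theorem generatedBy_oddEdges_closed_of_walkIn (hK : K = K₁ ∨ K = K₂) (c : H.Walk x x)
    (hc : WalkIn K c) :
    GeneratedBy (cyclesIn K₁ ∪ cyclesIn K₂) (oddEdges c) := by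
  refine (generatedBy_oddEdges_of_closed c hc).mono ?_
  rcases hK with rfl | rfl
  exacts [Set.subset_union_left, Set.subset_union_right]

variable (hcover : ∀ ⦃a b⦄, H.Adj a b → K₁.Adj a b ∨ K₂.Adj a b)
  (hconn : ∀ a ∈ K₁.verts ∩ K₂.verts, ∀ b ∈ K₁.verts ∩ K₂.verts,
    ∃ p : H.Walk a b, WalkIn (K₁ ⊓ K₂) p)
include hcover hconn

/-- Between two vertices of the overlap, any walk is homologous to a walk in `K₁ ⊓ K₂`: cut it
at the vertices where it passes from one `Kᵢ` to the other, all of which lie in the overlap. -/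
theorem generatedBy_oddEdges_symmDiff_of_inter (p : H.Walk x y) (hK : K = K₁ ∨ K = K₂)
    (s : H.Walk z x) (hs : WalkIn K s) (hz : z ∈ K₁.verts ∩ K₂.verts)
    (hy : y ∈ K₁.verts ∩ K₂.verts) (q : H.Walk z y) (hq : WalkIn (K₁ ⊓ K₂) q) :
    GeneratedBy (cyclesIn K₁ ∪ cyclesIn K₂) (oddEdges (s.append p) ∆ oddEdges q) := by
  induction p generalizing z K with
  | nil =>
    rw [Walk.append_nil, ← oddEdges_reverse q, ← oddEdges_append]
    exact generatedBy_oddEdges_closed_of_walkIn hK _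
      ((walkIn_append_iff _ _).mpr ⟨hs, (hq.mono (inf_le_of_eq_or_eq hK)).reverse⟩)
  | @cons x m y h p ih =>
    by_cases hx : x ∈ K₁.verts ∩ K₂.verts
    · obtain ⟨t₀, ht₀⟩ := hconn z hz x hx
      obtain ⟨t, ht⟩ := hconn x hx y hy
      obtain ⟨K', hK', hxm⟩ := exists_adj_of_cover hcover h
      have hrest := ih hK' h.toWalk (walkIn_toWalk hxm) hx hy t ht
      have hfirst := generatedBy_oddEdges_closed_of_walkIn hK (s.append t₀.reverse)
        ((walkIn_append_iff _ _).mpr ⟨hs, (ht₀.mono (inf_le_of_eq_or_eq hK)).reverse⟩)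
      have hloop : WalkIn (K₁ ⊓ K₂) ((t₀.append t).append q.reverse) := by
        simp only [walkIn_append_iff]
        exact ⟨⟨ht₀, ht⟩, hq.reverse⟩
      have hlast := generatedBy_oddEdges_closed_of_walkIn (K₂ := K₂) (Or.inl rfl) _
        (hloop.mono inf_le_left)
      -- the detours through `t₀` and `t` cancel
      have key : oddEdges (s.append (Walk.cons h p)) ∆ oddEdges q =
          oddEdges (s.append t₀.reverse) ∆ (oddEdges (Walk.cons h p) ∆
            oddEdges t) ∆ oddEdges ((t₀.append t).append q.reverse) := by
        simp only [oddEdges_append, oddEdges_reverse]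
        simp only [symmDiff_assoc, symmDiff_comm, symmDiff_left_comm, symmDiff_symmDiff_cancel_left]
      rw [key]
      exact (hfirst.symmDiff hrest).symmDiff hlast
    · have hxm := adj_of_notMem_inter hcover hK (hs.mem_verts s.end_mem_support) hx h
      rw [← Walk.concat_append]
      exact ih hK (s.concat h) (hs.concat hxm) hz hy q hq

theorem generatedBy_oddEdges_append_of_walkIn (p : H.Walk x y) (hK : K = K₁ ∨ K = K₂)
    (s : H.Walk y x) (hs : WalkIn K s) :
    GeneratedBy (cyclesIn K₁ ∪ cyclesIn K₂) (oddEdges (s.append p)) := by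
  induction p generalizing K with
  | nil => simpa using generatedBy_oddEdges_closed_of_walkIn hK s hs
  | @cons x m y h p ih =>
    by_cases hx : x ∈ K₁.verts ∩ K₂.verts
    · -- rotate the closed walk to start at `x`, which lies in the overlap
      have h' := generatedBy_oddEdges_symmDiff_of_inter hcover hconn ((Walk.cons h p).append s)
        hK Walk.nil (walkIn_nil_iff.mpr (hs.mem_verts s.end_mem_support)) hx hx Walk.nil
        (walkIn_nil_iff.mpr hx)
      rwa [Walk.nil_append, oddEdges_nil, ← Set.bot_eq_empty, symmDiff_bot, oddEdges_append,
        symmDiff_comm, ← oddEdges_append] at h'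
    · have hxm := adj_of_notMem_inter hcover hK (hs.mem_verts s.end_mem_support) hx h
      rw [← Walk.concat_append]
      exact ih hK (s.concat h) (hs.concat hxm)

theorem generatedBy_oddEdges_of_cover (c : H.Walk x x) :
    GeneratedBy (cyclesIn K₁ ∪ cyclesIn K₂) (oddEdges c) := by
  cases c with
  | nil => simpa using generatedBy_empty
  | @cons _ m _ h p =>
    obtain ⟨K, hK, hxm⟩ := exists_adj_of_cover hcover h
    exact generatedBy_oddEdges_append_of_walkIn hcover hconn p hK h.toWalk (walkIn_toWalk hxm)

end Union

section Labels

variable {V : Type u} {G : SimpleGraph V} {B B' : G.Subgraph} {C : Set V} {c c' x z : V}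

def IsShortestIn (B : G.Subgraph) (C : Set V) (p : G.Walk c x) : Prop :=
  p.IsPath ∧ WalkIn B p ∧
    ∀ c' ∈ C, ∀ q : G.Walk c' x, q.IsPath → WalkIn B q → p.length ≤ q.length

theorem mem_labelIn_iff {l : List V} :
    l ∈ labelIn G B C x ↔
      ∃ c ∈ C, ∃ p : G.Walk c x, IsShortestIn B C p ∧ l = p.support := by
  simp only [labelIn, IsShortestIn, Set.mem_ofPred_eq, and_assoc]

theorem IsShortestIn.length_le [DecidableEq V] {p : G.Walk c x} (hp : IsShortestIn B C p)
    (hc' : c' ∈ C) (q : G.Walk c' x) (hq : WalkIn B q) : p.length ≤ q.length :=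
  (hp.2.2 c' hc' q.bypass q.bypass_isPath hq.bypass).trans q.length_bypass_le_length

theorem IsShortestIn.of_append {p : G.Walk c z} {p' : G.Walk z x}
    (h : IsShortestIn B C (p.append p')) : IsShortestIn B C p ∧ WalkIn B p' := by
  classical
  have hB := (walkIn_append_iff _ _).mp h.2.1
  refine ⟨⟨h.1.of_append_left, hB.1, fun c' hc' q _ hq => ?_⟩, hB.2⟩
  have := h.length_le hc' (q.append p') ((walkIn_append_iff _ _).mpr ⟨hq, hB.2⟩)
  simp only [Walk.length_append] at this
  omega

theorem IsShortestIn.length_eq {p : G.Walk c x} {q : G.Walk c' x} (hp : IsShortestIn B C p)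
    (hq : IsShortestIn B C q) (hc : c ∈ C) (hc' : c' ∈ C) : p.length = q.length :=
  le_antisymm (hp.2.2 c' hc' q hq.1 hq.2.1) (hq.2.2 c hc p hp.1 hp.2.1)

theorem IsShortestIn.append_of_isShortestIn {p : G.Walk c z} {p' : G.Walk z x}
    (h : IsShortestIn B C (p.append p')) (hc : c ∈ C) {q : G.Walk c' z}
    (hq : IsShortestIn B C q) (hc' : c' ∈ C) : IsShortestIn B C (q.append p') := by
  classical
  have hlen : (q.append p').length = (p.append p').length := by
    simp only [Walk.length_append, hq.length_eq h.of_append.1 hc' hc]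
  have hB : WalkIn B (q.append p') := (walkIn_append_iff _ _).mpr ⟨hq.2.1, h.of_append.2⟩
  have hpath : (q.append p').IsPath := by
    rw [← (q.append p').bypass_eq_self_of_length_le_length_bypass]
    · exact (q.append p').bypass_isPath
    · exact hlen ▸ h.2.2 c' hc' _ (q.append p').bypass_isPath hB.bypass
  exact ⟨hpath, hB, fun c'' hc'' r hr hrB => hlen ▸ h.2.2 c'' hc'' r hr hrB⟩

theorem isShortestIn_of_support_mem_labelIn {p : G.Walk c x}
    (h : p.support ∈ labelIn G B C x) : IsShortestIn B C p := by
  obtain ⟨c', -, q, hq, hqp⟩ := mem_labelIn_iff.mp h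
  have hhead := hqp
  rw [← p.cons_tail_support, ← q.cons_tail_support] at hhead
  obtain rfl : c = c' := (List.cons.inj hhead).1
  rwa [Walk.ext_support hqp]

theorem labelIn_subset_of_append {p : G.Walk c z} {p' : G.Walk z x} (hc : c ∈ C)
    (h : IsShortestIn B C (p.append p')) (hsub : labelIn G B C x ⊆ labelIn G B' C x) :
    labelIn G B C z ⊆ labelIn G B' C z := by
  intro l hl
  obtain ⟨c', hc', q, hq, rfl⟩ := mem_labelIn_iff.mp hl
  have hqp' := h.append_of_isShortestIn hc hq hc'
  have hqp'B' := isShortestIn_of_support_mem_labelIn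
    (hsub (mem_labelIn_iff.mpr ⟨c', hc', _, hqp', rfl⟩))
  exact mem_labelIn_iff.mpr ⟨c', hc', q, hqp'B'.of_append.1, rfl⟩

theorem labelIn_eq_of_mem_support [DecidableEq V] {p : G.Walk c x} (hc : c ∈ C)
    (hp : IsShortestIn B C p) (hlab : labelIn G B C x = labelIn G B' C x)
    (hz : z ∈ p.support) : labelIn G B C z = labelIn G B' C z := by
  have hp' : IsShortestIn B' C p :=
    isShortestIn_of_support_mem_labelIn (hlab ▸ mem_labelIn_iff.mpr ⟨c, hc, p, hp, rfl⟩)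
  rw [← p.take_spec hz] at hp hp'
  exact (labelIn_subset_of_append hc hp hlab.le).antisymm
    (labelIn_subset_of_append hc hp' hlab.ge)

theorem labelIn_of_mem (hx : x ∈ C) (hB : x ∈ B.verts) : labelIn G B C x = {[x]} := by
  ext l
  rw [mem_labelIn_iff, Set.mem_singleton_iff]
  constructor
  · rintro ⟨c, -, p, hp, rfl⟩
    have := hp.2.2 x hx Walk.nil Walk.IsPath.nil (walkIn_nil_iff.mpr hB)
    rw [Walk.length_nil, Nat.le_zero, Walk.length_eq_zero_iff] at this
    cases this
    rfl
  · rintro rfl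
    refine ⟨x, hx, Walk.nil, ⟨Walk.IsPath.nil, walkIn_nil_iff.mpr hB, ?_⟩, rfl⟩
    exact fun _ _ _ _ _ => Nat.zero_le _

theorem exists_isShortestIn (hc : c ∈ C) (p : G.Walk c x) (hp : WalkIn B p) :
    ∃ c' ∈ C, ∃ q : G.Walk c' x, IsShortestIn B C q := by
  classical
  have hex : ∃ n, ∃ c' ∈ C, ∃ q : G.Walk c' x, q.IsPath ∧ WalkIn B q ∧ q.length = n :=
    ⟨_, c, hc, p.bypass, p.bypass_isPath, hp.bypass, rfl⟩
  obtain ⟨c', hc', q, hq, hqB, hlen⟩ := Nat.find_spec hex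
  exact ⟨c', hc', q, hq, hqB, fun c'' hc'' r hr hrB =>
    hlen ▸ Nat.find_min' hex ⟨c'', hc'', r, hr, hrB, rfl⟩⟩

end Labels

section Balls

variable {V : Type u} {G : SimpleGraph V} {a v w x y : V} {r : ℕ}

theorem walkIn_ball_of_dist_add_length (p : G.Walk y x) (hy : G.Reachable a y)
    (hlen : G.dist a y + p.length = G.dist a x) (hx : G.dist a x ≤ r / 2) :
    WalkIn (ball G a r) p := by
  induction p with
  | nil =>
    exact walkIn_nil_iff.mpr ⟨hy, by simpa using hlen ▸ hx⟩
  | @cons y m x h q ih =>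
    have hm : G.Reachable a m := hy.trans h.reachable
    have hym : G.dist a m ≤ G.dist a y + 1 := by
      simpa [dist_eq_one_iff_adj.mpr h] using hy.dist_triangle_left m
    have hmx : G.dist a x ≤ G.dist a m + q.length :=
      (hm.dist_triangle_left x).trans (Nat.add_le_add_left (dist_le q) _)
    rw [Walk.length_cons] at hlen
    -- distances from `a` grow by one along `p`, so no edge of `p` joins two vertices at
    -- distance exactly `r/2`
    refine (walkIn_cons_iff h q).mpr ⟨?_, ih hm (by omega) hx⟩
    exact ⟨h, ⟨hy, by omega⟩, ⟨hm, by omega⟩, fun _ _ => by omega⟩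

theorem walkIn_ball_of_length_eq_dist (p : G.Walk a x) (hp : p.length = G.dist a x)
    (hx : G.dist a x ≤ r / 2) : WalkIn (ball G a r) p :=
  walkIn_ball_of_dist_add_length p (Reachable.refl a) (by simp [hp]) hx

/-- Vertices at which the copies of `B_{r/2}(v)` and `B_{r/2}(w)` are identified in
`Expl(v,w)`. -/
def gluedVerts (G : SimpleGraph V) (v w : V) (r : ℕ) : Set V :=
  {z | z ∈ ballVerts G v r ∧ z ∈ ballVerts G w r ∧
    labelIn G (ball G v r) (core G v w) z = labelIn G (ball G w r) (core G v w) z}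

def gluedPart (G : SimpleGraph V) (v w : V) (r : ℕ) : G.Subgraph :=
  (ball G v r ⊓ ball G w r).induce (gluedVerts G v w r)

theorem walkIn_inf_ball_of_length_eq_dist (hdist : 2 * G.dist v w ≤ r) (p : G.Walk v w)
    (hp : p.length = G.dist v w) : WalkIn (ball G v r ⊓ ball G w r) p := by
  have hhalf : G.dist v w ≤ r / 2 := by omega
  refine le_inf (walkIn_ball_of_length_eq_dist p hp hhalf) (?_ : WalkIn (ball G w r) p)
  have := walkIn_ball_of_length_eq_dist p.reverse (by rw [Walk.length_reverse, hp, dist_comm])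
    (r := r) (by rwa [dist_comm])
  simpa only [Walk.reverse_reverse] using this.reverse

theorem walkIn_gluedPart_of_isPath (hdist : 2 * G.dist v w ≤ r) {p : G.Walk v w}
    (hp : p.IsPath) (hlen : p.length = G.dist v w) : WalkIn (gluedPart G v w r) p := by
  have hB := walkIn_inf_ball_of_length_eq_dist hdist p hlen
  refine hB.induce fun z hz => ?_
  have hcore : z ∈ core G v w := ⟨p, hp, hlen, hz⟩
  have hzv := (hB.mono inf_le_left).mem_verts hz
  have hzw := (hB.mono inf_le_right).mem_verts hz
  exact ⟨hzv, hzw, by rw [labelIn_of_mem hcore hzv, labelIn_of_mem hcore hzw]⟩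

theorem exists_walkIn_gluedPart_of_mem_core (hdist : 2 * G.dist v w ≤ r)
    (hc : x ∈ core G v w) : ∃ p : G.Walk v x, WalkIn (gluedPart G v w r) p := by
  classical
  obtain ⟨p, hp, hlen, hx⟩ := hc
  exact ⟨p.takeUntil x hx, (walkIn_gluedPart_of_isPath hdist hp hlen).takeUntil hx⟩

/-- A shortest path from the core to a glued vertex, chosen in `B_{r/2}(v)`, is also shortest
in `B_{r/2}(w)` as the labels agree, and then so is each of its initial segments. -/
theorem exists_walkIn_gluedPart_of_mem (hreach : G.Reachable v w)
    (hx : x ∈ gluedVerts G v w r) :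
    ∃ c ∈ core G v w, ∃ p : G.Walk c x, WalkIn (gluedPart G v w r) p := by
  classical
  obtain ⟨hxv, hxw, hlab⟩ := hx
  obtain ⟨π, hπ, hπlen⟩ := hreach.exists_path_of_dist
  obtain ⟨p₀, -, hp₀⟩ := hxv.1.exists_path_of_dist
  have hv : v ∈ core G v w := ⟨π, hπ, hπlen, π.start_mem_support⟩
  obtain ⟨c, hc, p, hp⟩ := exists_isShortestIn hv p₀
    (walkIn_ball_of_length_eq_dist p₀ hp₀ hxv.2)
  have hp' : IsShortestIn (ball G w r) (core G v w) p :=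
    isShortestIn_of_support_mem_labelIn (hlab ▸ mem_labelIn_iff.mpr ⟨c, hc, p, hp, rfl⟩)
  have hB : WalkIn (ball G v r ⊓ ball G w r) p := le_inf hp.2.1 hp'.2.1
  refine ⟨c, hc, p, hB.induce fun z hz => ?_⟩
  exact ⟨hp.2.1.mem_verts hz, hp'.2.1.mem_verts hz, labelIn_eq_of_mem_support hc hp hlab hz⟩

theorem exists_walkIn_gluedPart (hreach : G.Reachable v w) (hdist : 2 * G.dist v w ≤ r)
    (hx : x ∈ gluedVerts G v w r) : ∃ p : G.Walk v x, WalkIn (gluedPart G v w r) p := by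
  obtain ⟨c, hc, p, hp⟩ := exists_walkIn_gluedPart_of_mem hreach hx
  obtain ⟨q, hq⟩ := exists_walkIn_gluedPart_of_mem_core hdist hc
  exact ⟨q.append p, (walkIn_append_iff _ _).mpr ⟨hq, hp⟩⟩

end Balls

section Explorer

variable {V : Type u} {G : SimpleGraph V} {v w x y : V} {r : ℕ}

/-- The embedded copy `B_{r/2}(a)'` of the ball around `a` inside `Expl(a₁,a₂)`. -/
def ballCopy (G : SimpleGraph V) (a₁ a₂ : V) (r : ℕ) (a : V) :
    (expl G a₁ a₂ r).Subgraph where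
  verts := {p | inCopy G a₁ a₂ r a p}
  Adj p q := (expl G a₁ a₂ r).Adj p q ∧
    inCopy G a₁ a₂ r a p ∧ inCopy G a₁ a₂ r a q ∧ (ball G a r).Adj p.1 q.1
  adj_sub h := h.1
  edge_vert h := h.2.1
  symm := ⟨fun _ _ h => ⟨h.1.symm, h.2.2.1, h.2.1, h.2.2.2.symm⟩⟩

theorem mem_ballCopy_verts {a : V} {p : EVert V} :
    p ∈ (ballCopy G v w r a).verts ↔ inCopy G v w r a p := Iff.rfl

theorem ballCopy_adj {a : V} {p q : EVert V} :
    (ballCopy G v w r a).Adj p q ↔ (expl G v w r).Adj p q ∧ inCopy G v w r a p ∧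
      inCopy G v w r a q ∧ (ball G a r).Adj p.1 q.1 := Iff.rfl

theorem expl_adj_iff_ballCopy {p q : EVert V} :
    (expl G v w r).Adj p q ↔ (ballCopy G v w r v).Adj p q ∨ (ballCopy G v w r w).Adj p q := by
  constructor
  · rintro (h | h)
    exacts [Or.inl (ballCopy_adj.mpr ⟨Or.inl h, h⟩),
      Or.inr (ballCopy_adj.mpr ⟨Or.inr h, h⟩)]
  · rintro (h | h) <;> exact (ballCopy_adj.mp h).1

theorem ballCopyCycle_of_walkIn {a : V} {u : EVert V} {c : (expl G v w r).Walk u u}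
    (hc : WalkIn (ballCopy G v w r a) c) : BallCopyCycle G v w r a c :=
  ⟨fun _ hp => mem_ballCopy_verts.mp (hc.mem_verts hp), fun _ hd =>
    (ballCopy_adj.mp (hc.2 (Walk.adj_toSubgraph_iff_mem_edges.mpr (c.edges_eq_map_darts ▸
      List.mem_map_of_mem hd)))).2.2.2⟩

abbrev gluedVert (G : SimpleGraph V) (v w : V) (r : ℕ) (x : V) : EVert V :=
  (x, labelIn G (ball G v r) (core G v w) x)

theorem gluedVert_mem_inter (hx : x ∈ gluedVerts G v w r) :
    gluedVert G v w r x ∈ (ballCopy G v w r v).verts ∩ (ballCopy G v w r w).verts :=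
  ⟨mem_ballCopy_verts.mpr ⟨hx.1, rfl⟩, mem_ballCopy_verts.mpr ⟨hx.2.1, hx.2.2⟩⟩

theorem exists_walkIn_inf_ballCopy (q : G.Walk x y) (hq : WalkIn (gluedPart G v w r) q) :
    ∃ Q : (expl G v w r).Walk (gluedVert G v w r x) (gluedVert G v w r y),
      WalkIn (ballCopy G v w r v ⊓ ballCopy G v w r w) Q := by
  induction q with
  | nil =>
    exact ⟨Walk.nil, walkIn_nil_iff.mpr (gluedVert_mem_inter (walkIn_nil_iff.mp hq))⟩
  | @cons x m y h q ih =>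
    obtain ⟨⟨hx, hm, hadj⟩, hq⟩ := (walkIn_cons_iff h q).mp hq
    obtain ⟨Q, hQ⟩ := ih hq
    obtain ⟨hxv, hxw⟩ := gluedVert_mem_inter hx
    obtain ⟨hmv, hmw⟩ := gluedVert_mem_inter hm
    have hexpl : (expl G v w r).Adj (gluedVert G v w r x) (gluedVert G v w r m) :=
      Or.inl ⟨hxv, hmv, hadj.1⟩
    exact ⟨Walk.cons hexpl Q, (walkIn_cons_iff _ _).mpr
      ⟨⟨ballCopy_adj.mpr ⟨hexpl, hxv, hmv, hadj.1⟩,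
        ballCopy_adj.mpr ⟨hexpl, hxw, hmw, hadj.2⟩⟩, hQ⟩⟩

theorem exists_walkIn_inf_ballCopy_from_base (hreach : G.Reachable v w)
    (hdist : 2 * G.dist v w ≤ r) {p : EVert V}
    (hp : p ∈ (ballCopy G v w r v).verts ∩ (ballCopy G v w r w).verts) :
    ∃ P : (expl G v w r).Walk (gluedVert G v w r v) p,
      WalkIn (ballCopy G v w r v ⊓ ballCopy G v w r w) P := by
  obtain ⟨x, l⟩ := p
  obtain ⟨⟨hxv, rfl⟩, hxw, hlab⟩ :
      (x ∈ ballVerts G v r ∧ l = labelIn G (ball G v r) (core G v w) x) ∧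
      (x ∈ ballVerts G w r ∧ l = labelIn G (ball G w r) (core G v w) x) := hp
  obtain ⟨q, hq⟩ := exists_walkIn_gluedPart hreach hdist ⟨hxv, hxw, hlab⟩
  exact exists_walkIn_inf_ballCopy q hq

theorem exists_walkIn_inf_ballCopy_of_mem_inter (hreach : G.Reachable v w)
    (hdist : 2 * G.dist v w ≤ r) :
    ∀ p ∈ (ballCopy G v w r v).verts ∩ (ballCopy G v w r w).verts,
    ∀ q ∈ (ballCopy G v w r v).verts ∩ (ballCopy G v w r w).verts,
    ∃ T : (expl G v w r).Walk p q, WalkIn (ballCopy G v w r v ⊓ ballCopy G v w r w) T := by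
  intro p hp q hq
  obtain ⟨P, hP⟩ := exists_walkIn_inf_ballCopy_from_base hreach hdist hp
  obtain ⟨Q, hQ⟩ := exists_walkIn_inf_ballCopy_from_base hreach hdist hq
  exact ⟨P.reverse.append Q, (walkIn_append_iff _ _).mpr ⟨hP.reverse, hQ⟩⟩

end Explorer

/-- Every cycle of the explorer-neighbourhood `Expl(v,w)` is generated over `𝔽₂` by the
cycles of the embedded balls `B_{r/2}(v)'` and `B_{r/2}(w)'`. -/
theorem stmt9 {V : Type u} (G : SimpleGraph V) (v w : V) (r : ℕ)
    (hreach : G.Reachable v w) (hdist : 2 * G.dist v w ≤ r)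
    {u : EVert V} (o : (expl G v w r).Walk u u) (ho : o.IsCycle) :
    GeneratedBy
      {S | ∃ (u' : EVert V) (c : (expl G v w r).Walk u' u'), c.IsCycle ∧
        (BallCopyCycle G v w r v c ∨ BallCopyCycle G v w r w c) ∧ S = walkEdgeSet c}
      (walkEdgeSet o) := by
  classical
  have hgen := generatedBy_oddEdges_of_cover (fun _ _ => expl_adj_iff_ballCopy.mp)
    (exists_walkIn_inf_ballCopy_of_mem_inter hreach hdist) o
  rw [oddEdges_of_isTrail ho.isTrail] at hgen
  refine hgen.mono ?_
  rintro S (⟨u', c, hc, hcK, rfl⟩ | ⟨u', c, hc, hcK, rfl⟩)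
  exacts [⟨u', c, hc, Or.inl (ballCopyCycle_of_walkIn hcK), rfl⟩,
    ⟨u', c, hc, Or.inr (ballCopyCycle_of_walkIn hcK), rfl⟩]

end LocalSep
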